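/- Let M be a symmetric positive definite 2n×2n real matrix and r > 0, and let Ω_M = {z ∈ ℝ^{2n} : ⟨Mz, z⟩ ≤ r²}. Then the symplectic ℏ-polar dual of Ω_M is Ω_M^{ℏ,σ} = {z ∈ ℝ^{2n} : ⟨−J M⁻¹ J z, z⟩ ≤ ℏ²/r²}, where J is the standard symplectic matrix. -/

import Mathlib

open MeasureTheory Real Metric
open scoped RealInnerProductSpace Pointwise

noncomputable section

/-- `ℝⁿ` with its Euclidean structure. -/
abbrev En (n : ℕ) := EuclideanSpace ℝ (Fin n)

/-- The phase space `ℝ²ⁿ = ℝⁿ × ℝⁿ` with its Euclidean structure, the first block of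
coordinates being the positions `x` and the second block the momenta `p`. -/
abbrev PS (n : ℕ) := EuclideanSpace ℝ (Fin n ⊕ Fin n)

/-- The standard symplectic matrix `J = [[0, I], [-I, 0]]`. -/
def Jmat (n : ℕ) : Matrix (Fin n ⊕ Fin n) (Fin n ⊕ Fin n) ℝ :=
  Matrix.fromBlocks 0 1 (-1) 0

/-- The standard symplectic form `σ(z, z') = ⟨Jz, z'⟩`. -/
def symp (n : ℕ) (z z' : PS n) : ℝ := ⟪(Matrix.toEuclideanLin (Jmat n)) z, z'⟫

/-- The quadratic form `z ↦ ⟨Mz, z⟩`. -/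
def qf {m : Type*} [Fintype m] [DecidableEq m] (M : Matrix m m ℝ)
    (z : EuclideanSpace ℝ m) : ℝ := ⟪(Matrix.toEuclideanLin M) z, z⟫

/-- The symplectic `ℏ`-polar dual `Ω^{ℏ,σ} = {z' : ∀ z ∈ Ω, σ(z, z') ≤ ℏ}`. -/
def sympDual (n : ℕ) (ℏ : ℝ) (Ω : Set (PS n)) : Set (PS n) :=
  {z' | ∀ z ∈ Ω, symp n z z' ≤ ℏ}

/-- A linear automorphism of `ℝ²ⁿ` is symplectic if it preserves the symplectic form. -/
def IsSymplectic {n : ℕ} (S : PS n ≃ₗ[ℝ] PS n) : Prop :=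
  ∀ z z', symp n (S z) (S z') = symp n z z'

/-!
The ellipsoid `{⟨Mz, z⟩ ≤ r²}` has support function `u ↦ r √⟨M⁻¹u, u⟩`: the bound is the
Cauchy–Schwarz inequality `⟨u, z⟩² ≤ ⟨Mz, z⟩ ⟨M⁻¹u, u⟩`, and it is attained at a multiple of
`M⁻¹u`. Hence the ordinary `ℏ`-polar dual of the ellipsoid is `{⟨M⁻¹u, u⟩ ≤ ℏ²/r²}`. Since
`σ(z, z') = ⟨Jᵀz', z⟩`, the symplectic dual is the preimage of the ordinary one under `z' ↦ Jᵀz'`,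
and `⟨M⁻¹Jᵀz', Jᵀz'⟩ = ⟨-JM⁻¹Jz', z'⟩` because `Jᵀ = -J`.
-/

open Matrix WithLp

namespace Matrix.PosDef

variable {m : Type*} [Fintype m] [DecidableEq m] {M : Matrix m m ℝ}

lemma mulVec_inv_mulVec (hM : M.PosDef) (u : m → ℝ) : M *ᵥ (M⁻¹ *ᵥ u) = u := by
  rw [mulVec_mulVec, mul_nonsing_inv _ hM.det_pos.ne'.isUnit, one_mulVec]

theorem sq_dotProduct_le_mul (hM : M.PosDef) (u z : m → ℝ) :
    (u ⬝ᵥ z) ^ 2 ≤ (z ⬝ᵥ M *ᵥ z) * (u ⬝ᵥ M⁻¹ *ᵥ u) := by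
  set v := M⁻¹ *ᵥ u
  have hMv : M *ᵥ v = u := hM.mulVec_inv_mulVec u
  have hvM : v ᵥ* M = u := by
    rw [← mulVec_transpose, (isHermitian_iff_isSymm.1 hM.isHermitian).eq, hMv]
  -- `t ↦ ⟨M(z - tv), z - tv⟩` is a nonnegative quadratic, so its discriminant is `≤ 0`.
  have quad : ∀ t : ℝ, 0 ≤ (u ⬝ᵥ v) * (t * t) + -2 * (u ⬝ᵥ z) * t + (z ⬝ᵥ M *ᵥ z) := by
    intro t
    have h := hM.posSemidef.dotProduct_mulVec_nonneg (z - t • v)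
    simp only [star_trivial, mulVec_sub, mulVec_smul, hMv, dotProduct_sub, sub_dotProduct,
      dotProduct_smul, smul_dotProduct, smul_eq_mul, dotProduct_mulVec v, hvM] at h
    rw [dotProduct_comm z u, dotProduct_comm v u] at h
    linarith
  have := discrim_le_zero quad
  rw [discrim] at this
  linarith

theorem exists_dotProduct_eq_mul_sqrt (hM : M.PosDef) (r : ℝ) (u : m → ℝ) :
    ∃ z, z ⬝ᵥ M *ᵥ z ≤ r ^ 2 ∧ u ⬝ᵥ z = r * √(u ⬝ᵥ M⁻¹ *ᵥ u) := by
  have hc : u ⬝ᵥ M⁻¹ *ᵥ u = √(u ⬝ᵥ M⁻¹ *ᵥ u) * √(u ⬝ᵥ M⁻¹ *ᵥ u) :=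
    (Real.mul_self_sqrt (by simpa using hM.inv.posSemidef.dotProduct_mulVec_nonneg u)).symm
  generalize √(u ⬝ᵥ M⁻¹ *ᵥ u) = s at hc ⊢
  refine ⟨(r / s) • (M⁻¹ *ᵥ u), ?_, ?_⟩ <;>
    simp only [mulVec_smul, hM.mulVec_inv_mulVec, dotProduct_smul, smul_eq_mul,
      dotProduct_comm _ u, hc]
  · obtain rfl | hs := eq_or_ne s 0
    · simp [sq_nonneg]
    · exact (by field_simp : r / s * (r / s * (s * s)) = r ^ 2).le
  · obtain rfl | hs := eq_or_ne s 0
    · simp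
    · field_simp

theorem forall_dotProduct_le_iff (hM : M.PosDef) {r ℏ : ℝ} (hr : 0 < r) (hℏ : 0 ≤ ℏ)
    (u : m → ℝ) :
    (∀ z, z ⬝ᵥ M *ᵥ z ≤ r ^ 2 → u ⬝ᵥ z ≤ ℏ) ↔ u ⬝ᵥ M⁻¹ *ᵥ u ≤ ℏ ^ 2 / r ^ 2 := by
  have hc : 0 ≤ u ⬝ᵥ M⁻¹ *ᵥ u := by simpa using hM.inv.posSemidef.dotProduct_mulVec_nonneg u
  constructor
  · intro h
    obtain ⟨z, hz, hzu⟩ := hM.exists_dotProduct_eq_mul_sqrt r u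
    have hsq : (r * √(u ⬝ᵥ M⁻¹ *ᵥ u)) ^ 2 ≤ ℏ ^ 2 :=
      pow_le_pow_left₀ (by positivity) (hzu ▸ h z hz) 2
    rw [mul_pow, Real.sq_sqrt hc] at hsq
    rw [le_div_iff₀ (by positivity)]
    linarith
  · intro h z hz
    refine le_of_sq_le_sq ?_ hℏ
    calc (u ⬝ᵥ z) ^ 2 ≤ (z ⬝ᵥ M *ᵥ z) * (u ⬝ᵥ M⁻¹ *ᵥ u) := hM.sq_dotProduct_le_mul u z
      _ ≤ r ^ 2 * (ℏ ^ 2 / r ^ 2) :=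
        mul_le_mul hz h hc (by positivity)
      _ = ℏ ^ 2 := by field_simp

end Matrix.PosDef

lemma qf_eq_dotProduct {m : Type*} [Fintype m] [DecidableEq m] (M : Matrix m m ℝ)
    (z : EuclideanSpace ℝ m) : qf M z = ofLp z ⬝ᵥ M *ᵥ ofLp z := by
  simp [qf, EuclideanSpace.inner_eq_star_dotProduct]

lemma Jmat_transpose (n : ℕ) : (Jmat n)ᵀ = -Jmat n := by
  simp [Jmat, fromBlocks_transpose, fromBlocks_neg]

lemma Jmat_mulVec (n : ℕ) (x : Fin n ⊕ Fin n → ℝ) : Jmat n *ᵥ x = -(x ᵥ* Jmat n) := by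
  rw [← vecMul_transpose, Jmat_transpose, vecMul_neg]

lemma symp_eq_dotProduct (n : ℕ) (z z' : PS n) :
    symp n z z' = ofLp z' ᵥ* Jmat n ⬝ᵥ ofLp z := by
  rw [symp, EuclideanSpace.inner_eq_star_dotProduct, star_trivial, ofLp_toLpLin,
    toLin'_apply, ← dotProduct_mulVec]

lemma qf_neg_Jmat_mul_mul_Jmat (n : ℕ) (A : Matrix (Fin n ⊕ Fin n) (Fin n ⊕ Fin n) ℝ)
    (z : PS n) :
    qf (-(Jmat n * A * Jmat n)) z = ofLp z ᵥ* Jmat n ⬝ᵥ A *ᵥ (ofLp z ᵥ* Jmat n) := by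
  rw [qf_eq_dotProduct, neg_mulVec, ← mulVec_mulVec, ← mulVec_mulVec, dotProduct_neg,
    dotProduct_mulVec, Jmat_mulVec, mulVec_neg, dotProduct_neg, neg_neg]

/-- the symplectic `ℏ`-polar dual of the ellipsoid `Ω_M = {⟨Mz,z⟩ ≤ r²}`
(`M` symmetric positive definite) is the ellipsoid `{⟨-JM⁻¹Jz, z⟩ ≤ ℏ²/r²}`. -/
theorem stmt2 (n : ℕ) (ℏ r : ℝ) (hℏ : 0 < ℏ) (hr : 0 < r)
    (M : Matrix (Fin n ⊕ Fin n) (Fin n ⊕ Fin n) ℝ) (hM : M.PosDef) :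
    sympDual n ℏ {z | qf M z ≤ r ^ 2}
      = {z | qf (-(Jmat n * M⁻¹ * Jmat n)) z ≤ ℏ ^ 2 / r ^ 2} := by
  ext w
  rw [Set.mem_ofPred_eq, qf_neg_Jmat_mul_mul_Jmat, ← hM.forall_dotProduct_le_iff hr hℏ.le,
    (ofLp_surjective 2).forall]
  simp only [sympDual, Set.mem_ofPred_eq, symp_eq_dotProduct, qf_eq_dotProduct]
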